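/- Let X be a nonempty compact metric space and T : X → X a continuous mapping. Then there exists a Borel probability measure μ on X which is T-invariant, i.e. μ(T⁻¹(A)) = μ(A) for every Borel set A (equivalently, the pushforward of μ under T equals μ). -/

import Mathlib

/-!
Krylov–Bogolyubov: the empirical measures `(1/n) ∑_{k<n} δ_{T^k x₀}` have a weak-* cluster
point `μ`, since the probability measures on a compact space form a compact space. Pushing an
empirical measure forward by `T` shifts the orbit by one step, which changes the integral of a
bounded continuous `f` by at most `2‖f‖/n`; so `T_* μ` and `μ` are limits along the same
ultrafilter and coincide.
-/

open MeasureTheory Filter Topology BoundedContinuousFunction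
open scoped NNReal

section BirkhoffAverageMeasure

variable {α X : Type*} [MeasurableSpace X]

lemma isProbabilityMeasure_birkhoffAverage (T : α → α) (g : α → Measure X)
    [∀ a, IsProbabilityMeasure (g a)] {n : ℕ} (hn : n ≠ 0) (x : α) :
    IsProbabilityMeasure (birkhoffAverage ℝ≥0 T g n x) := by
  constructor
  simp [birkhoffAverage, birkhoffSum, ENNReal.smul_def, hn, ENNReal.inv_mul_cancel]

lemma integral_birkhoffAverage_dirac [MeasurableSingletonClass X] (T : X → X) (n : ℕ) (x : X)
    (f : X → ℝ) :
    ∫ y, f y ∂(birkhoffAverage ℝ≥0 T Measure.dirac n x) = birkhoffAverage ℝ T f n x := by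
  simp [birkhoffAverage, birkhoffSum, integral_smul_nnreal_measure,
    integral_finsetSum_measure fun k _ ↦ integrable_dirac (f := f) enorm_lt_top, NNReal.smul_def]

end BirkhoffAverageMeasure

lemma birkhoffAverage_comp_self {α M : Type*} (R : Type*) [DivisionSemiring R] [AddCommMonoid M]
    [Module R M] (T : α → α) (g : α → M) (n : ℕ) (x : α) :
    birkhoffAverage R T (g ∘ T) n x = birkhoffAverage R T g n (T x) := by
  simp only [birkhoffAverage, birkhoffSum, Function.comp_apply,
    (Function.Commute.iterate_self T _).eq]

namespace MeasureTheory.ProbabilityMeasure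

variable {Ω ι : Type*} [TopologicalSpace Ω] [MeasurableSpace Ω] [HasOuterApproxClosed Ω]
  [BorelSpace Ω]

lemma map_eq_self_of_mapClusterPt {L : Filter ι} {νs : ι → ProbabilityMeasure Ω}
    {μ : ProbabilityMeasure Ω} (hμ : MapClusterPt μ L νs) {T : Ω → Ω} (hT : Continuous T)
    (h : ∀ f : Ω →ᵇ ℝ,
      Tendsto (fun i ↦ ∫ x, f (T x) ∂(νs i : Measure Ω) - ∫ x, f x ∂(νs i : Measure Ω)) L (𝓝 0)) :
    μ.map hT.measurable.aemeasurable = μ := by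
  obtain ⟨U, hUL, hU⟩ := mapClusterPt_iff_ultrafilter.1 hμ
  refine tendsto_nhds_unique (tendsto_map_of_tendsto_of_continuous _ _ hU hT) ?_
  refine tendsto_iff_forall_integral_tendsto.2 fun f ↦ ?_
  have := (tendsto_iff_forall_integral_tendsto.1 hU f).add ((h f).mono_left hUL)
  simp only [add_sub_cancel, add_zero] at this
  convert this using 2 with i
  rw [toMeasure_map, integral_map hT.aemeasurable f.continuous.aestronglyMeasurable]

end MeasureTheory.ProbabilityMeasure

theorem exists_invariant_measure_of_continuous
    {X : Type*} [MetricSpace X] [CompactSpace X] [Nonempty X]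
    [MeasurableSpace X] [BorelSpace X]
    (T : X → X) (hT : Continuous T) :
    ∃ μ : Measure X, IsProbabilityMeasure μ ∧ μ.map T = μ := by
  obtain ⟨x₀⟩ := ‹Nonempty X›
  let νs : ℕ → ProbabilityMeasure X := fun n ↦
    ⟨birkhoffAverage ℝ≥0 T Measure.dirac (n + 1) x₀,
      isProbabilityMeasure_birkhoffAverage _ _ n.succ_ne_zero _⟩
  obtain ⟨μ, hμ⟩ := exists_clusterPt_of_compactSpace (map νs atTop)
  refine ⟨μ, inferInstance, ?_⟩
  have hinv := ProbabilityMeasure.map_eq_self_of_mapClusterPt hμ hT fun f ↦ ?_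
  · simpa using congrArg ((↑) : ProbabilityMeasure X → Measure X) hinv
  have hint (g : X → ℝ) (n : ℕ) :
      ∫ x, g x ∂(νs n : Measure X) = birkhoffAverage ℝ T g (n + 1) x₀ :=
    integral_birkhoffAverage_dirac T (n + 1) x₀ g
  simp only [hint, ← Function.comp_def f T, birkhoffAverage_comp_self]
  exact (tendsto_birkhoffAverage_apply_sub_birkhoffAverage' ℝ f.isBounded_range T x₀).comp
    (tendsto_add_atTop_nat 1)
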